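/- Let H_1 and H_2 be finite-dimensional complex Hilbert spaces, Φ ∈ H_1 a unit vector, (κ_j)_{j=1}^{d} an orthonormal basis of H_2, and let ψ̃ = Σ_{j=1}^{d} λ_j ψ_j ⊗ κ_j, where each ψ_j ∈ H_1 is a unit vector and λ_j ∈ C with Σ_j |λ_j|² = 1. Suppose Σ_{j=1}^{d} |λ_j|² |⟨Φ, ψ_j⟩| ≥ 1 − c for some c ∈ [0,1]. Then there exists a unit vector aux ∈ H_2 such that ‖ψ̃ − Φ ⊗ aux‖² ≤ 2c. -/

import Mathlib

/-- The elementary tensor `u ⊗ v` of two finite-dimensional vectors, realized in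
`EuclideanSpace ℂ (ι × κ)`. -/
noncomputable def tensorVec {ι κ : Type*} [Fintype ι] [Fintype κ]
    (u : EuclideanSpace ℂ ι) (v : EuclideanSpace ℂ κ) : EuclideanSpace ℂ (ι × κ) :=
  (WithLp.equiv 2 ((ι × κ) → ℂ)).symm
    (fun p => (WithLp.equiv 2 (ι → ℂ)) u p.1 * (WithLp.equiv 2 (κ → ℂ)) v p.2)

lemma tensorVec_apply {ι κ : Type*} [Fintype ι] [Fintype κ]
    (u : EuclideanSpace ℂ ι) (v : EuclideanSpace ℂ κ) (p : ι × κ) :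
    tensorVec u v p = u p.1 * v p.2 := rfl

lemma tensorVec_inner {ι κ : Type*} [Fintype ι] [Fintype κ]
    (a c : EuclideanSpace ℂ ι) (b d : EuclideanSpace ℂ κ) :
    (inner ℂ (tensorVec a b) (tensorVec c d) : ℂ) = (inner ℂ a c : ℂ) * (inner ℂ b d : ℂ) := by
  simp only [PiLp.inner_apply, RCLike.inner_apply, tensorVec_apply, map_mul]
  rw [Finset.sum_mul_sum, Fintype.sum_prod_type]
  congr 1; ext i; congr 1; ext j; ring

/-- If `ψ̃ = Σ_j λ_j ψ_j ⊗ κ_j` with `(κ_j)` an orthonormal basis, `ψ_j` unit vectors,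
`Σ_j |λ_j|² = 1`, and `Σ_j |λ_j|² |⟨Φ, ψ_j⟩| ≥ 1 − c`, then there is a unit vector `aux`
with `‖ψ̃ − Φ ⊗ aux‖² ≤ 2c`. -/
theorem close_to_product_state
    {ι κ : Type} [Fintype ι] [Fintype κ]
    (Φ : EuclideanSpace ℂ ι) (hΦ : ‖Φ‖ = 1)
    (d : ℕ) (κv : Fin d → EuclideanSpace ℂ κ)
    (hortho : Orthonormal ℂ κv)
    (hspan : Submodule.span ℂ (Set.range κv) = ⊤)
    (lam : Fin d → ℂ) (ψ : Fin d → EuclideanSpace ℂ ι)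
    (hψ : ∀ j, ‖ψ j‖ = 1)
    (hlam : ∑ j, ‖lam j‖ ^ 2 = 1)
    (c : ℝ) (hc0 : 0 ≤ c) (hc1 : c ≤ 1)
    (hclose : ∑ j, ‖lam j‖ ^ 2 * ‖(inner ℂ Φ (ψ j) : ℂ)‖ ≥ 1 - c) :
    ∃ aux : EuclideanSpace ℂ κ, ‖aux‖ = 1 ∧
      ‖(∑ j, lam j • tensorVec (ψ j) (κv j)) - tensorVec Φ aux‖ ^ 2 ≤ 2 * c := by
  classical
  set a : Fin d → ℂ := fun j => (inner ℂ Φ (ψ j) : ℂ) with ha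
  set ph : Fin d → ℂ := fun j => if a j = 0 then 1 else a j / (‖a j‖ : ℂ) with hph
  have hph_abs : ∀ j, ‖ph j‖ = 1 := by
    intro j
    by_cases h : a j = 0
    · simp [hph, h]
    · have hne : ‖a j‖ ≠ 0 := by simpa using h
      simp only [hph, h, if_false, norm_div, Complex.norm_real, Real.norm_eq_abs]
      rw [_root_.abs_of_nonneg (norm_nonneg _)]
      exact div_self hne
  set μ : Fin d → ℂ := fun j => lam j * ph j with hμ
  have hμ_abs : ∀ j, ‖μ j‖ = ‖lam j‖ := by
    intro j; simp [hμ, map_mul, hph_abs j]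
  set aux : EuclideanSpace ℂ κ := ∑ j, μ j • κv j with haux
  have haux_norm : ‖aux‖ = 1 := by
    have h1 : (inner ℂ aux aux : ℂ) = ∑ j, (starRingEnd ℂ) (μ j) * μ j := by
      rw [haux, hortho.inner_sum]
    have h2 : (inner ℂ aux aux : ℂ).re = 1 := by
      rw [h1]
      have he : ∀ j : Fin d, (starRingEnd ℂ) (μ j) * μ j = ((‖μ j‖ ^ 2 : ℝ) : ℂ) := by
        intro j
        rw [RCLike.conj_mul]
        norm_num
      simp_rw [he]
      rw [← Complex.ofReal_sum]
      simp_rw [hμ_abs]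
      rw [hlam]; simp
    have h3 : ‖aux‖ ^ 2 = 1 := by
      rw [← inner_self_eq_norm_sq (𝕜 := ℂ)]; exact h2
    nlinarith [norm_nonneg aux]
  refine ⟨aux, haux_norm, ?_⟩
  set v : Fin d → EuclideanSpace ℂ ι := fun j => lam j • ψ j - μ j • Φ with hv
  have hdiff : (∑ j, lam j • tensorVec (ψ j) (κv j)) - tensorVec Φ aux
      = ∑ j, tensorVec (v j) (κv j) := by
    ext p
    have h1 : ((∑ j, lam j • tensorVec (ψ j) (κv j)) : EuclideanSpace ℂ (ι × κ)) p
        = ∑ j, lam j * (ψ j p.1 * κv j p.2) := by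
      rw [show ((∑ j, lam j • tensorVec (ψ j) (κv j)) : EuclideanSpace ℂ (ι × κ)) p
          = ∑ j, (lam j • tensorVec (ψ j) (κv j)) p from by rw [WithLp.ofLp_sum, Finset.sum_apply]]
      rfl
    have h2 : aux p.2 = ∑ j, μ j * κv j p.2 := by
      rw [haux]
      rw [WithLp.ofLp_sum, Finset.sum_apply]; rfl
    have h3 : ((∑ j, tensorVec (v j) (κv j)) : EuclideanSpace ℂ (ι × κ)) p
        = ∑ j, (lam j * ψ j p.1 - μ j * Φ p.1) * κv j p.2 := by
      rw [show ((∑ j, tensorVec (v j) (κv j)) : EuclideanSpace ℂ (ι × κ)) p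
          = ∑ j, tensorVec (v j) (κv j) p from by rw [WithLp.ofLp_sum, Finset.sum_apply]]
      rfl
    simp only [PiLp.sub_apply, h1, h3, tensorVec_apply, h2, Finset.mul_sum,
      ← Finset.sum_sub_distrib]
    congr 1; ext j; ring
  rw [hdiff]
  -- norm squared of orthogonal sum
  have hkk : ∀ i j : Fin d, (inner ℂ (κv i) (κv j) : ℂ) = if i = j then 1 else 0 := by
    intro i j
    rcases eq_or_ne i j with rfl | h
    · rw [inner_self_eq_norm_sq_to_K, hortho.1 i]; simp
    · simp [h, hortho.2 h]
  have hnormsq : ‖(∑ j, tensorVec (v j) (κv j))‖ ^ 2 = ∑ j, ‖v j‖ ^ 2 := by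
    have hin : (inner ℂ (∑ j, tensorVec (v j) (κv j)) (∑ j, tensorVec (v j) (κv j)) : ℂ)
        = ∑ j, (inner ℂ (v j) (v j) : ℂ) := by
      rw [inner_sum]
      simp_rw [sum_inner, tensorVec_inner, hkk]
      simp [Finset.sum_ite_eq, Finset.mem_univ]
    rw [← inner_self_eq_norm_sq (𝕜 := ℂ), hin]
    rw [map_sum]
    exact Finset.sum_congr rfl fun j _ => inner_self_eq_norm_sq (v j)
  rw [hnormsq]
  -- compute each term
  have hterm : ∀ j : Fin d, ‖v j‖ ^ 2
      = 2 * ‖lam j‖ ^ 2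
        - 2 * (‖lam j‖ ^ 2 * ‖a j‖) := by
    intro j
    have hns : ‖v j‖ ^ 2 = ‖lam j • ψ j‖ ^ 2
        - 2 * (inner ℂ (lam j • ψ j) (μ j • Φ) : ℂ).re + ‖μ j • Φ‖ ^ 2 := by
      rw [hv]; exact norm_sub_sq (𝕜 := ℂ) _ _
    have hn1 : ‖lam j • ψ j‖ ^ 2 = ‖lam j‖ ^ 2 := by
      rw [norm_smul, hψ j]; simp
    have hn2 : ‖μ j • Φ‖ ^ 2 = ‖lam j‖ ^ 2 := by
      rw [norm_smul, hΦ]; simp [hμ_abs j]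
    have hcross : (inner ℂ (lam j • ψ j) (μ j • Φ) : ℂ)
        = ((‖lam j‖ ^ 2 * ‖a j‖ : ℝ) : ℂ) := by
      rw [inner_smul_left, inner_smul_right]
      have hinner : (inner ℂ (ψ j) Φ : ℂ) = (starRingEnd ℂ) (a j) := by
        simp only [ha]; exact (inner_conj_symm (ψ j) Φ).symm
      rw [hinner]
      simp only [hμ]
      have hcl : (starRingEnd ℂ) (lam j) * lam j
          = ((‖lam j‖ ^ 2 : ℝ) : ℂ) := by
        rw [RCLike.conj_mul]; norm_num
      have hpa : ph j * (starRingEnd ℂ) (a j) = ((‖a j‖ : ℝ) : ℂ) := by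
        by_cases h : a j = 0
        · simp [hph, h]
        · have hne : (‖a j‖ : ℂ) ≠ 0 := by
            simpa using h
          rw [hph]
          simp only [h, if_false]
          rw [div_mul_eq_mul_div, Complex.mul_conj, Complex.normSq_eq_norm_sq]
          rw [sq]
          push_cast
          field_simp
      have hre : (starRingEnd ℂ) (lam j) * (lam j * ph j * (starRingEnd ℂ) (a j))
          = ((starRingEnd ℂ) (lam j) * lam j) * (ph j * (starRingEnd ℂ) (a j)) := by ring
      rw [hre, hcl, hpa]
      push_cast; ring
    rw [hns, hn1, hn2, hcross, Complex.ofReal_re]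
    ring
  simp_rw [hterm]
  rw [Finset.sum_sub_distrib, ← Finset.mul_sum, ← Finset.mul_sum, hlam]
  have : (∑ j, ‖lam j‖ ^ 2 * ‖a j‖) ≥ 1 - c := hclose
  linarith
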